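/- arXiv:1810.05390 — 3 statements merged into one kernel-verified Lean document; each statement's English description precedes it below -/
import Mathlib

section
/- Let (X, μ1, μ2) be a generalized bitopological space and let i, j ∈ {1,2} with i ≠ j. If A1 and A2 are μj-weakly separated sets, each of which is g_{μi}-open with respect to μj, then A1 ∪ A2 is g_{μi}-open with respect to μj. -/
open Set

/-- A generalized topology on `X`: contains `∅` and is closed under arbitrary unions. -/
def IsGenTop {X : Type*} (μ : Set (Set X)) : Prop :=
  ∅ ∈ μ ∧ ∀ S ⊆ μ, ⋃₀ S ∈ μ

/-- `A` is μ-closed iff its complement is μ-open. -/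
def gClosedSet {X : Type*} (μ : Set (Set X)) (A : Set X) : Prop := Aᶜ ∈ μ

/-- μ-closure: intersection of all μ-closed sets containing `A`. -/
def gCl {X : Type*} (μ : Set (Set X)) (A : Set X) : Set X :=
  ⋂₀ {F | gClosedSet μ F ∧ A ⊆ F}

/-- `A^∧_μ`: intersection of all μ-open sets containing `A`. -/
def wedgeOp {X : Type*} (μ : Set (Set X)) (A : Set X) : Set X :=
  ⋂₀ {U | U ∈ μ ∧ A ⊆ U}

/-- `A^∨_μ`: union of all μ-closed sets contained in `A`. -/
def veeOp {X : Type*} (μ : Set (Set X)) (A : Set X) : Set X :=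
  ⋃₀ {F | gClosedSet μ F ∧ F ⊆ A}

/-- `L` is a `∧_μ`-set. -/
def IsWedgeSet {X : Type*} (μ : Set (Set X)) (L : Set X) : Prop := L = wedgeOp μ L

/-- `M` is a `∨_μ`-set. -/
def IsVeeSet {X : Type*} (μ : Set (Set X)) (M : Set X) : Prop := M = veeOp μ M

/-- `A` is `g_{μi}`-closed with respect to `μj`. -/
def GClosedWrt {X : Type*} (μi μj : Set (Set X)) (A : Set X) : Prop :=
  ∀ U ∈ μj, A ⊆ U → gCl μi A ⊆ U

/-- `A` is `g_{μi}`-open with respect to `μj`. -/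
def GOpenWrt {X : Type*} (μi μj : Set (Set X)) (A : Set X) : Prop :=
  GClosedWrt μi μj Aᶜ

/-- `A` is `λ_{μi}`-closed with respect to `μj`. -/
def LamClosedWrt {X : Type*} (μi μj : Set (Set X)) (A : Set X) : Prop :=
  ∃ F L : Set X, gClosedSet μi F ∧ IsWedgeSet μj L ∧ A = F ∩ L

/-- `A` is `λ_{μi}`-open with respect to `μj`. -/
def LamOpenWrt {X : Type*} (μi μj : Set (Set X)) (A : Set X) : Prop :=
  LamClosedWrt μi μj Aᶜ

/-- `A` is pairwise `λ`-closed. -/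
def PairwiseLamClosed {X : Type*} (μ1 μ2 : Set (Set X)) (A : Set X) : Prop :=
  ∃ F1 F2 L1 L2 : Set X, gClosedSet μ1 F1 ∧ gClosedSet μ2 F2 ∧
    IsWedgeSet μ1 L1 ∧ IsWedgeSet μ2 L2 ∧ A = (F1 ∩ F2) ∩ (L1 ∩ L2)

def PairwiseT0 {X : Type*} (μ1 μ2 : Set (Set X)) : Prop :=
  ∀ x y : X, x ≠ y →
    (∃ U ∈ μ1, x ∈ U ∧ y ∉ U) ∨ (∃ V ∈ μ2, y ∈ V ∧ x ∉ V)

def PairwiseT1 {X : Type*} (μ1 μ2 : Set (Set X)) : Prop :=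
  ∀ x y : X, x ≠ y →
    (∃ U ∈ μ1, x ∈ U ∧ y ∉ U) ∧ (∃ V ∈ μ2, y ∈ V ∧ x ∉ V)

def PairwiseSymmetric {X : Type*} (μ1 μ2 : Set (Set X)) : Prop :=
  ∀ x y : X, (x ∈ gCl μ1 {y} → y ∈ gCl μ2 {x}) ∧ (x ∈ gCl μ2 {y} → y ∈ gCl μ1 {x})

def PairwiseTHalf {X : Type*} (μ1 μ2 : Set (Set X)) : Prop :=
  (∀ A : Set X, GClosedWrt μ1 μ2 A → gClosedSet μ1 A) ∧
  (∀ A : Set X, GClosedWrt μ2 μ1 A → gClosedSet μ2 A)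

def PairwiseR0 {X : Type*} (μ1 μ2 : Set (Set X)) : Prop :=
  (∀ G ∈ μ1, ∀ x ∈ G, gCl μ2 {x} ⊆ G) ∧ (∀ G ∈ μ2, ∀ x ∈ G, gCl μ1 {x} ⊆ G)

def PairwiseLamSymmetric {X : Type*} (μ1 μ2 : Set (Set X)) : Prop :=
  ∀ A : Set X, PairwiseLamClosed μ1 μ2 A →
    LamClosedWrt μ1 μ2 A ∧ LamClosedWrt μ2 μ1 A

/-- `A` and `B` are μ-weakly separated. -/
def MuWeaklySeparated {X : Type*} (μ : Set (Set X)) (A B : Set X) : Prop :=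
  ∃ U ∈ μ, ∃ V ∈ μ, A ⊆ U ∧ B ⊆ V ∧ A ∩ V = ∅ ∧ B ∩ U = ∅

def PairwiseTQuarter {X : Type*} (μ1 μ2 : Set (Set X)) : Prop :=
  ∀ P : Set X, P.Finite → ∀ y ∉ P,
    ∃ A : Set X, P ⊆ A ∧ y ∉ A ∧
      (A ∈ μ1 ∨ A ∈ μ2 ∨ gClosedSet μ1 A ∨ gClosedSet μ2 A)

def PairwiseTThreeEighths {X : Type*} (μ1 μ2 : Set (Set X)) : Prop :=
  ∀ P : Set X, P.Countable → ∀ y ∉ P,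
    ∃ A : Set X, P ⊆ A ∧ y ∉ A ∧
      (A ∈ μ1 ∨ A ∈ μ2 ∨ gClosedSet μ1 A ∨ gClosedSet μ2 A)

def PairwiseTFiveEighths {X : Type*} (μ1 μ2 : Set (Set X)) : Prop :=
  ∀ P : Set X, ∀ y ∉ P,
    ∃ A : Set X, P ⊆ A ∧ y ∉ A ∧
      (A ∈ μ1 ∨ A ∈ μ2 ∨ gClosedSet μ1 A ∨ gClosedSet μ2 A)
lemma IsGenTop.union_mem {X : Type*} {μ : Set (Set X)} (hμ : IsGenTop μ) {U V : Set X}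
    (hU : U ∈ μ) (hV : V ∈ μ) : U ∪ V ∈ μ := by
  simpa using hμ.2 {U, V} (pair_subset hU hV)

lemma gCl_mono {X : Type*} (μ : Set (Set X)) {A B : Set X} (h : A ⊆ B) :
    gCl μ A ⊆ gCl μ B :=
  sInter_subset_sInter fun _ hF => ⟨hF.1, h.trans hF.2⟩

lemma compl_subset_union_of_compl_inter_compl_subset {X : Type*} {A B W V : Set X}
    (hW : Aᶜ ∩ Bᶜ ⊆ W) (hV : B ⊆ V) : Aᶜ ⊆ W ∪ V := by
  intro x hx
  by_cases hxB : x ∈ B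
  · exact Or.inr (hV hxB)
  · exact Or.inl (hW ⟨hx, hxB⟩)

/- Enlarging `W` by the separating neighbourhoods makes the hypotheses on `A` and `B`
applicable; the overlap `U ∩ V` meets neither `A` nor `B`, so it already lies in `W`. -/
theorem GOpenWrt.union_of_weaklySeparated {X : Type*} {μi μj : Set (Set X)}
    (hμj : IsGenTop μj) {A B : Set X} (hsep : MuWeaklySeparated μj A B)
    (hA : GOpenWrt μi μj A) (hB : GOpenWrt μi μj B) : GOpenWrt μi μj (A ∪ B) := by
  obtain ⟨U, hU, V, hV, hAU, hBV, hAV, hBU⟩ := hsep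
  intro W hW hWsub
  rw [compl_union] at hWsub ⊢
  have hclA : gCl μi Aᶜ ⊆ W ∪ V :=
    hA _ (hμj.union_mem hW hV) (compl_subset_union_of_compl_inter_compl_subset hWsub hBV)
  have hclB : gCl μi Bᶜ ⊆ W ∪ U :=
    hB _ (hμj.union_mem hW hU)
      (compl_subset_union_of_compl_inter_compl_subset (inter_comm Aᶜ Bᶜ ▸ hWsub) hAU)
  have hVU : V ∩ U ⊆ W := fun x ⟨hxV, hxU⟩ => hWsub
    ⟨fun hxA => hAV.subset ⟨hxA, hxV⟩, fun hxB => hBU.subset ⟨hxB, hxU⟩⟩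
  calc gCl μi (Aᶜ ∩ Bᶜ) ⊆ gCl μi Aᶜ ∩ gCl μi Bᶜ :=
        subset_inter (gCl_mono _ inter_subset_left) (gCl_mono _ inter_subset_right)
    _ ⊆ (W ∪ V) ∩ (W ∪ U) := inter_subset_inter hclA hclB
    _ = W ∪ V ∩ U := (union_inter_distrib_left W V U).symm
    _ ⊆ W := union_subset subset_rfl hVU

theorem stmt2_general {X : Type*} (μ : Fin 2 → Set (Set X)) (hμ : ∀ k, IsGenTop (μ k))
    (i j : Fin 2) (A1 A2 : Set X)
    (hsep : MuWeaklySeparated (μ j) A1 A2)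
    (h1 : GOpenWrt (μ i) (μ j) A1) (h2 : GOpenWrt (μ i) (μ j) A2) :
    GOpenWrt (μ i) (μ j) (A1 ∪ A2) :=
  GOpenWrt.union_of_weaklySeparated (hμ j) hsep h1 h2

theorem stmt2 {X : Type*} (μ : Fin 2 → Set (Set X)) (hμ : ∀ k, IsGenTop (μ k))
    (i j : Fin 2) (hij : i ≠ j) (A1 A2 : Set X)
    (hsep : MuWeaklySeparated (μ j) A1 A2)
    (h1 : GOpenWrt (μ i) (μ j) A1) (h2 : GOpenWrt (μ i) (μ j) A2) :
    GOpenWrt (μ i) (μ j) (A1 ∪ A2) :=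
  stmt2_general μ hμ i j A1 A2 hsep h1 h2
end

section
/- A generalized bitopological space (X, μ1, μ2) is pairwise T_{1/2} if and only if for all i, j ∈ {1,2} with i ≠ j and every x ∈ X, if the singleton {x} is not μj-closed then {x} is μi-open. -/
open Set

/-!
If `{x}` is not `μj`-closed, the only `μj`-open superset of `{x}ᶜ` is `X`, so `{x}ᶜ` is
`g_{μi}`-closed with respect to `μj`; `T_{1/2}` then makes it `μi`-closed, i.e. `{x}` is
`μi`-open. Conversely, a point `x ∈ cl_{μi} A \ A` is cut off from `A` by `{x}ᶜ`, which is
`μj`-open or `μi`-closed according to which alternative of the singleton condition holds.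
-/

section GenTop

variable {X : Type*} {μ μi μj : Set (Set X)}

lemma subset_gCl (A : Set X) : A ⊆ gCl μ A :=
  fun _ hx _ hF => hF.2 hx

lemma gCl_subset_of_gClosedSet {A F : Set X} (hF : gClosedSet μ F) (hAF : A ⊆ F) :
    gCl μ A ⊆ F :=
  sInter_subset_of_mem ⟨hF, hAF⟩

lemma gClosedSet_gCl (hμ : IsGenTop μ) (A : Set X) : gClosedSet μ (gCl μ A) := by
  rw [gClosedSet, gCl, compl_sInter]
  exact hμ.2 _ (by rintro _ ⟨F, ⟨hF, -⟩, rfl⟩; exact hF)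

lemma gClosedSet_of_gCl_subset (hμ : IsGenTop μ) {A : Set X} (h : gCl μ A ⊆ A) :
    gClosedSet μ A :=
  subset_antisymm h (subset_gCl A) ▸ gClosedSet_gCl hμ A

lemma gClosedWrt_compl_singleton {x : X} (hx : ¬ gClosedSet μj {x}) :
    GClosedWrt μi μj {x}ᶜ := by
  intro U hU hsub
  have hx_mem : x ∈ U := by
    by_contra hxU
    have hU_eq : U = {x}ᶜ := subset_antisymm (subset_compl_singleton_iff.2 hxU) hsub
    exact hx (by rwa [gClosedSet, ← hU_eq])
  intro y _
  by_cases hy : y = x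
  · exact hy ▸ hx_mem
  · exact hsub hy

lemma forall_gClosedWrt_imp_gClosedSet_iff (hi : IsGenTop μi) :
    (∀ A, GClosedWrt μi μj A → gClosedSet μi A) ↔
      ∀ x : X, ¬ gClosedSet μj {x} → {x} ∈ μi := by
  constructor
  · intro hT x hx
    simpa [gClosedSet] using hT _ (gClosedWrt_compl_singleton hx)
  · intro hsing A hA
    refine gClosedSet_of_gCl_subset hi fun x hx => by_contra fun hxA => ?_
    have hA_sub : A ⊆ {x}ᶜ := subset_compl_singleton_iff.2 hxA
    have h_cut : gCl μi A ⊆ {x}ᶜ := by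
      by_cases hxj : gClosedSet μj {x}
      · exact hA _ hxj hA_sub
      · exact gCl_subset_of_gClosedSet (by simpa [gClosedSet] using hsing x hxj) hA_sub
    exact h_cut hx rfl

end GenTop

theorem stmt6 {X : Type*} (μ1 μ2 : Set (Set X))
    (h1 : IsGenTop μ1) (h2 : IsGenTop μ2) :
    PairwiseTHalf μ1 μ2 ↔
      ((∀ x : X, ¬ gClosedSet μ2 {x} → {x} ∈ μ1) ∧
       (∀ x : X, ¬ gClosedSet μ1 {x} → {x} ∈ μ2)) :=
  and_congr (forall_gClosedWrt_imp_gClosedSet_iff h1) (forall_gClosedWrt_imp_gClosedSet_iff h2)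
end

section
/- Let (X, μ1, μ2) be a generalized bitopological space and let i, j ∈ {1,2} with i ≠ j. The collection of all sets that are λ_{μi}-open with respect to μj is a generalized topology on X (it contains ∅ and is closed under arbitrary unions), and it contains every μi-open set and every ∨_{μj}-set. -/
open Set

/-! A λ-closed set is an intersection `F ∩ L` of a μi-closed set and a `∧_{μj}`-set. Both kinds of
sets are stable under arbitrary intersections (a generalized topology is closed under unions, and
`∧` is monotone), so λ-closed sets are too, and λ-open sets are closed under unions. A μi-open `U`
is λ-open as `Uᶜ = Uᶜ ∩ X`; a `∨_{μj}`-set `M` is λ-open as `Mᶜ = X ∩ Mᶜ`, where `Mᶜ`, an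
intersection of μj-open sets, is a `∧_{μj}`-set. -/

namespace IsGenTop

variable {X : Type*} {μ : Set (Set X)}

lemma iUnion_mem {ι : Type*} (h : IsGenTop μ) {f : ι → Set X} (hf : ∀ s, f s ∈ μ) :
    (⋃ s, f s) ∈ μ := by
  simpa only [sUnion_range] using h.2 (range f) (range_subset_iff.2 hf)

lemma gClosedSet_univ (h : IsGenTop μ) : gClosedSet μ univ := by
  simpa only [gClosedSet, compl_univ] using h.1

lemma gClosedSet_iInter {ι : Type*} (h : IsGenTop μ) {f : ι → Set X}
    (hf : ∀ s, gClosedSet μ (f s)) : gClosedSet μ (⋂ s, f s) := by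
  simpa only [gClosedSet, compl_iInter] using h.iUnion_mem hf

end IsGenTop

section WedgeSet

variable {X : Type*} (μ : Set (Set X))

lemma subset_wedgeOp (A : Set X) : A ⊆ wedgeOp μ A :=
  fun _ hx _ hU => hU.2 hx

lemma wedgeOp_mono {A B : Set X} (h : A ⊆ B) : wedgeOp μ A ⊆ wedgeOp μ B :=
  fun _ hx U hU => hx U ⟨hU.1, h.trans hU.2⟩

lemma isWedgeSet_univ : IsWedgeSet μ (univ : Set X) :=
  (subset_wedgeOp μ univ).antisymm (subset_univ _)

lemma isWedgeSet_iInter {ι : Type*} {f : ι → Set X} (hf : ∀ s, IsWedgeSet μ (f s)) :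
    IsWedgeSet μ (⋂ s, f s) := by
  refine (subset_wedgeOp μ _).antisymm fun x hx => mem_iInter.2 fun s => ?_
  rw [hf s]
  exact wedgeOp_mono μ (iInter_subset f s) hx

lemma IsVeeSet.isWedgeSet_compl {M : Set X} (hM : IsVeeSet μ M) : IsWedgeSet μ Mᶜ := by
  refine (subset_wedgeOp μ _).antisymm fun x hx hxM => ?_
  rw [hM] at hxM
  obtain ⟨F, ⟨hF, hFM⟩, hxF⟩ := hxM
  exact hx Fᶜ ⟨hF, compl_subset_compl.2 hFM⟩ hxF

end WedgeSet

section LamOpen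

variable {X : Type*} {μi μj : Set (Set X)}

lemma lamOpenWrt_of_mem {U : Set X} (hU : U ∈ μi) : LamOpenWrt μi μj U :=
  ⟨Uᶜ, univ, by rwa [gClosedSet, compl_compl], isWedgeSet_univ μj, (inter_univ _).symm⟩

lemma IsVeeSet.lamOpenWrt (hμi : IsGenTop μi) {M : Set X} (hM : IsVeeSet μj M) :
    LamOpenWrt μi μj M :=
  ⟨univ, Mᶜ, hμi.gClosedSet_univ, hM.isWedgeSet_compl μj, (univ_inter _).symm⟩

lemma lamClosedWrt_iInter {ι : Type*} (hμi : IsGenTop μi) {f : ι → Set X}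
    (hf : ∀ s, LamClosedWrt μi μj (f s)) : LamClosedWrt μi μj (⋂ s, f s) := by
  choose F L hF hL hFL using hf
  refine ⟨⋂ s, F s, ⋂ s, L s, hμi.gClosedSet_iInter hF, isWedgeSet_iInter μj hL, ?_⟩
  simp only [hFL, iInter_inter_distrib]

lemma lamOpenWrt_sUnion (hμi : IsGenTop μi) {S : Set (Set X)}
    (hS : ∀ A ∈ S, LamOpenWrt μi μj A) : LamOpenWrt μi μj (⋃₀ S) := by
  rw [LamOpenWrt, sUnion_eq_iUnion, compl_iUnion]
  exact lamClosedWrt_iInter hμi fun A => hS A A.2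

lemma isGenTop_lamOpenWrt (hμi : IsGenTop μi) : IsGenTop {A : Set X | LamOpenWrt μi μj A} :=
  ⟨lamOpenWrt_of_mem hμi.1, fun _ hS => lamOpenWrt_sUnion hμi hS⟩

end LamOpen

theorem stmt9_general {X : Type*} (μ : Fin 2 → Set (Set X)) (hμ : ∀ k, IsGenTop (μ k))
    (i j : Fin 2) :
    IsGenTop {A : Set X | LamOpenWrt (μ i) (μ j) A} ∧
    (∀ U ∈ μ i, LamOpenWrt (μ i) (μ j) U) ∧
    (∀ M : Set X, IsVeeSet (μ j) M → LamOpenWrt (μ i) (μ j) M) :=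
  ⟨isGenTop_lamOpenWrt (hμ i), fun _ => lamOpenWrt_of_mem,
    fun _ hM => hM.lamOpenWrt (hμ i)⟩

theorem stmt9 {X : Type*} (μ : Fin 2 → Set (Set X)) (hμ : ∀ k, IsGenTop (μ k))
    (i j : Fin 2) (hij : i ≠ j) :
    IsGenTop {A : Set X | LamOpenWrt (μ i) (μ j) A} ∧
    (∀ U ∈ μ i, LamOpenWrt (μ i) (μ j) U) ∧
    (∀ M : Set X, IsVeeSet (μ j) M → LamOpenWrt (μ i) (μ j) M) :=
  stmt9_general μ hμ i j
end
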